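/- Let Σ = {a,b,c} and let A_{//a[.//b]} be the BDSTA over Σ with states Q = {q₀,q₁}, top states 𝒯 = {q₀,q₁}, bottom states ℬ = {q₀}, selecting configurations 𝒮 = {(q₁,a)}, and transitions (q₁,{b},q₀,q₀), (q₁,{b},q₀,q₁), (q₀,{a,c},q₀,q₀), (q₀,{a,c},q₀,q₁), (q₁,{a},q₁,q₀), (q₁,{a},q₁,q₁), (q₁,{b,c},q₁,q₀), (q₁,{b,c},q₁,q₁). Then there is no top-down deterministic selecting tree automaton (TDSTA) A' over Σ with A' ≡ A_{//a[.//b]}. -/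

import Mathlib

/-- Binary trees over an alphabet `σ`: `leaf` is the leaf symbol `#`. -/
inductive BTree (σ : Type) : Type where
  | leaf : BTree σ
  | node : σ → BTree σ → BTree σ → BTree σ

namespace BTree

/-- `mem π t` : the node `π` (a sequence over `{1,2}`, here `Bool` with
`false` = first child, `true` = second child) belongs to `dom t`. -/
def mem {σ : Type} : List Bool → BTree σ → Prop
  | [], _ => True
  | _ :: _, .leaf => False
  | false :: π, .node _ t1 _ => mem π t1
  | true :: π, .node _ _ t2 => mem π t2

/-- The label of `t` at node `π`: `some l` if `t(π) = l ∈ σ`,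
and `none` if `t(π) = #` or `π ∉ dom t`. -/
def labelAt {σ : Type} : BTree σ → List Bool → Option σ
  | .leaf, _ => none
  | .node l _ _, [] => some l
  | .node _ t1 _, false :: π => labelAt t1 π
  | .node _ _ t2, true :: π => labelAt t2 π

end BTree

/-- A selecting tree automaton (STA) over alphabet `σ` with states `Q`:
top states, bottom states, selecting configurations and transitions
`(q, L, q₁, q₂)` with `L ⊆ σ`. -/
structure STA (σ Q : Type) where
  top : Set Q
  bot : Set Q
  sel : Set (Q × σ)
  delta : Set (Q × Set σ × Q × Q)

namespace STA

variable {σ Q : Type}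

/-- Destination states: `δ(q,l) = {(q',q'') | ∃ L, l ∈ L ∧ (q,L,q',q'') ∈ δ}`. -/
def dst (A : STA σ Q) (q : Q) (l : σ) : Set (Q × Q) :=
  {p | ∃ L, l ∈ L ∧ (q, L, p.1, p.2) ∈ A.delta}

/-- Source states: `δ(q₁,q₂,l) = {q | ∃ L, l ∈ L ∧ (q,L,q₁,q₂) ∈ δ}`. -/
def src (A : STA σ Q) (q1 q2 : Q) (l : σ) : Set Q :=
  {q | ∃ L, l ∈ L ∧ (q, L, q1, q2) ∈ A.delta}

/-- `R` is a run of `A` over `t`. -/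
def IsRun (A : STA σ Q) (t : BTree σ) (R : List Bool → Q) : Prop :=
  ∀ π l, t.labelAt π = some l →
    R π ∈ A.src (R (π ++ [false])) (R (π ++ [true])) l

/-- `R` is an accepting run of `A` over `t`. -/
def Accepting (A : STA σ Q) (t : BTree σ) (R : List Bool → Q) : Prop :=
  A.IsRun t R ∧ R [] ∈ A.top ∧
    ∀ π, BTree.mem π t → t.labelAt π = none → R π ∈ A.bot

/-- The language of `A`. -/
def lang (A : STA σ Q) : Set (BTree σ) := {t | ∃ R, A.Accepting t R}

/-- The set of nodes of `t` selected by `A`. -/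
def selected (A : STA σ Q) (t : BTree σ) : Set (List Bool) :=
  {π | ∃ R l, A.Accepting t R ∧ t.labelAt π = some l ∧ (R π, l) ∈ A.sel}

/-- `A` is top-down deterministic. -/
def TDDet (A : STA σ Q) : Prop :=
  (∃ q, A.top = {q}) ∧ ∀ q l, ∃ p, A.dst q l = {p}

/-- `A` is bottom-up deterministic. -/
def BUDet (A : STA σ Q) : Prop :=
  (∃ q, A.bot = {q}) ∧ ∀ q1 q2 l, ∃ q, A.src q1 q2 l = {q}

/-- `A` is top-down complete. -/
def TDComplete (A : STA σ Q) : Prop := ∀ q l, (A.dst q l).Nonempty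

/-- `A` is bottom-up complete. -/
def BUComplete (A : STA σ Q) : Prop := ∀ q1 q2 l, (A.src q1 q2 l).Nonempty

/-- One-step reachability between states. -/
def step (A : STA σ Q) (p p' : Q) : Prop :=
  ∃ L q1 q2, (p, L, q1, q2) ∈ A.delta ∧ (p' = q1 ∨ p' = q2)

/-- Reachability between states. -/
def reach (A : STA σ Q) : Q → Q → Prop := Relation.ReflTransGen A.step

/-- `A[q]` : the restriction of `A` to the state `q`
(top states become `{q}` and everything is restricted to states reachable from `q`). -/
def restrict (A : STA σ Q) (q : Q) : STA σ Q where
  top := {q}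
  bot := {p | p ∈ A.bot ∧ A.reach q p}
  sel := {ps | ps ∈ A.sel ∧ A.reach q ps.1}
  delta := {tr | tr ∈ A.delta ∧ A.reach q tr.1}

/-- A state is non-changing if `δ(q,l) = {(q,q)}` for every label. -/
def NonChanging (A : STA σ Q) (q : Q) : Prop := ∀ l, A.dst q l = {(q, q)}

/-- Top-down universal state. -/
def TDUniversal (A : STA σ Q) (q : Q) : Prop := A.NonChanging q ∧ q ∈ A.bot

/-- Top-down sink state. -/
def TDSink (A : STA σ Q) (q : Q) : Prop := A.NonChanging q ∧ q ∉ A.bot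

end STA

/-- Equivalence of STAs: same language and same selected nodes on every tree. -/
def STAEquiv {σ Q Q' : Type} (A : STA σ Q) (B : STA σ Q') : Prop :=
  A.lang = B.lang ∧ ∀ t, A.selected t = B.selected t

/-- `A` is a minimal top-down complete TDSTA: no equivalent top-down complete
TDSTA has strictly fewer states. -/
def MinimalTD {σ Q : Type} (A : STA σ Q) : Prop :=
  A.TDDet ∧ A.TDComplete ∧
    ∀ (Q' : Type) [Finite Q'], ∀ B : STA σ Q',
      B.TDDet → B.TDComplete → STAEquiv B A → Nat.card Q ≤ Nat.card Q'

/-- `A` is a minimal bottom-up complete BDSTA. -/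
def MinimalBU {σ Q : Type} (A : STA σ Q) : Prop :=
  A.BUDet ∧ A.BUComplete ∧
    ∀ (Q' : Type) [Finite Q'], ∀ B : STA σ Q',
      B.BUDet → B.BUComplete → STAEquiv B A → Nat.card Q ≤ Nat.card Q'

/-- `B` behaves like `A_⊤`: it accepts every tree and selects no node. -/
def IsTopSTA {σ Q : Type} (B : STA σ Q) : Prop :=
  B.lang = Set.univ ∧ ∀ t, B.selected t = ∅

/-- The three-letter alphabet `Σ = {a, b, c}`. -/
inductive ABC : Type where
  | a | b | c
deriving DecidableEq

instance : Fintype ABC where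
  elems := {ABC.a, ABC.b, ABC.c}
  complete := by intro x; cases x <;> simp

/-- The TDSTA `A_{//a//b}` (states `q₀ = false`, `q₁ = true`). -/
def Aab : STA ABC Bool where
  top := {false}
  bot := Set.univ
  sel := {(true, ABC.b)}
  delta := {(false, ({ABC.a} : Set ABC), true, false),
            (false, ({ABC.b, ABC.c} : Set ABC), false, false),
            (true, (Set.univ : Set ABC), true, true)}

/-- The BDSTA `A_{//a[.//b]}` (states `q₀ = false`, `q₁ = true`). -/
def Aafb : STA ABC Bool where
  top := Set.univ
  bot := {false}
  sel := {(true, ABC.a)}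
  delta := {(true, ({ABC.b} : Set ABC), false, false),
            (true, ({ABC.b} : Set ABC), false, true),
            (false, ({ABC.a, ABC.c} : Set ABC), false, false),
            (false, ({ABC.a, ABC.c} : Set ABC), false, true),
            (true, ({ABC.a} : Set ABC), true, false),
            (true, ({ABC.a} : Set ABC), true, true),
            (true, ({ABC.b, ABC.c} : Set ABC), true, false),
            (true, ({ABC.b, ABC.c} : Set ABC), true, true)}


/-!
A top-down deterministic STA has a single top state, so every accepting run starts in the same
state at the root, and whether the root of an accepted tree is selected depends only on the root
label. `Aafb` violates this: it selects the root of `a(b(#,#),#)` and accepts `a(#,#)` without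
selecting its root, since its selecting state `q₁` can sit above a leaf only at a `b`-node.
-/

namespace STA

variable {σ Q : Type}

theorem root_mem_selected_node_of_mem_lang {A : STA σ Q} (htop : A.top.Subsingleton)
    {l : σ} {t₁ t₂ u₁ u₂ : BTree σ} (hsel : [] ∈ A.selected (.node l t₁ t₂))
    (hlang : .node l u₁ u₂ ∈ A.lang) : [] ∈ A.selected (.node l u₁ u₂) := by
  obtain ⟨R, l', hR, hl', hRsel⟩ := hsel
  obtain ⟨R', hR'⟩ := hlang
  cases hl'
  refine ⟨R', l, hR', rfl, ?_⟩
  rwa [htop hR'.2.1 hR.2.1]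

end STA

def treeAB : BTree ABC := .node .a (.node .b .leaf .leaf) .leaf

def treeA : BTree ABC := .node .a .leaf .leaf

theorem root_mem_selected_treeAB : [] ∈ Aafb.selected treeAB := by
  refine ⟨fun π => decide (π = [] ∨ π = [false]), .a, ⟨?_, by simp [Aafb], ?_⟩, rfl, by simp [Aafb]⟩
  · intro π l h
    rcases π with _ | ⟨_ | _, _ | ⟨_ | _, π⟩⟩ <;> simp only [treeAB, BTree.labelAt, Option.some.injEq, reduceCtorEq] at h <;> subst h
    · exact ⟨{ABC.a}, rfl, by simp [Aafb]⟩
    · exact ⟨{ABC.b}, rfl, by simp [Aafb]⟩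
  · intro π _ h
    rcases π with _ | ⟨_ | _, _ | ⟨_ | _, π⟩⟩ <;> simp_all [treeAB, BTree.labelAt, Aafb]

theorem treeA_mem_lang : treeA ∈ Aafb.lang := by
  refine ⟨fun _ => false, ?_, by simp [Aafb], fun _ _ _ => rfl⟩
  intro π l h
  rcases π with _ | ⟨_ | _, π⟩ <;> simp only [treeA, BTree.labelAt, Option.some.injEq, reduceCtorEq] at h
  subst h
  exact ⟨{ABC.a, ABC.c}, by simp, by simp [Aafb]⟩

theorem root_not_mem_selected_treeA : [] ∉ Aafb.selected treeA := by
  rintro ⟨R, l, ⟨hrun, -, hbot⟩, hl, hsel⟩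
  cases hl
  have hroot : R [] = true := by simpa [Aafb] using hsel
  have hleft : R [false] = false := by simpa [Aafb] using hbot [false] trivial rfl
  obtain ⟨L, haL, hδ⟩ := hrun [] .a rfl
  simp only [List.nil_append, hroot, hleft, Aafb, Set.mem_insert_iff, Set.mem_singleton_iff,
    Prod.mk.injEq] at hδ
  rcases hδ with ⟨-, rfl, -⟩ | ⟨-, rfl, -⟩ | h | h | h | h | h | h <;> simp_all

/-- no TDSTA is equivalent to `A_{//a[.//b]}`. -/
theorem stmt3 :
    ∀ (Q' : Type) [Finite Q'], ∀ B : STA ABC Q', B.TDDet → ¬ STAEquiv B Aafb := by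
  rintro Q' _ B ⟨⟨q, htop⟩, -⟩ ⟨hlang, hsel⟩
  have hsubsingleton : B.top.Subsingleton := htop ▸ Set.subsingleton_singleton
  have hAB : [] ∈ B.selected treeAB := hsel treeAB ▸ root_mem_selected_treeAB
  have hA : treeA ∈ B.lang := hlang ▸ treeA_mem_lang
  apply root_not_mem_selected_treeA
  rw [← hsel]
  exact STA.root_mem_selected_node_of_mem_lang hsubsingleton hAB hA
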